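/- Let q(t) be a classical solution in the probability simplex of the ODE system q_0' = (1 - q_0 - q_1) q_1, q_n' = q_{n-1} Σ_{j=0}^{n-2} q_j + q_{n+1} Σ_{j=n+2}^{2k} q_j - q_n(1 - q_n) for 0 < n < 2k, q_{2k}' = (1 - q_{2k-1} - q_{2k}) q_{2k-1}. Then d/dt [(1/2) Σ_{i,j=0}^{2k} |i-j| q_i q_j] = (q_0 - q_{2k})² Σ_{ℓ=1}^{2k-1} q_ℓ + Σ_{ℓ=1}^{2k-1} q_ℓ²(1 - q_ℓ) + Σ_{ℓ=1}^{2k-1} q_ℓ²(1 - q_ℓ - q_0 - q_{2k}) + 2 Σ_{1 ≤ i < j < ℓ ≤ 2k-1} q_i q_j q_ℓ, and this quantity is nonnegative. -/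

import Mathlib

/-!
With `F m = q 0 + ⋯ + q m`, counting `|i - j|` as the number of cut points `m` with
`min i j ≤ m < max i j` turns the quantity into `∑_{m < 2k} F m (1 - F m)`. The system is in
conservation form, `F m' = q (m+1) (1 - F (m+1)) - q m F (m-1)`, and summation by parts gives the
derivative as `∑_{0 < l < 2k} (q l (1 - F (l-1) - F l)² + q l² (1 - q l))`, which is nonnegative
term by term. Expanding the squares in the middle masses `q 1, …, q (2k-1)` gives the stated form.
-/

open Finset

section IntervalSums

variable {M : Type*} [AddCommMonoid M]

theorem sum_Icc_eq_sum_Icc_sub_one_add {a b : ℤ} (h : a ≤ b) (f : ℤ → M) :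
    ∑ i ∈ Icc a b, f i = ∑ i ∈ Icc a (b - 1), f i + f b := by
  rw [← insert_Icc_sub_one_right_eq_Icc h, sum_insert (by simp), add_comm]

theorem sum_Icc_eq_add_sum_Icc_add_one {a b : ℤ} (h : a ≤ b) (f : ℤ → M) :
    ∑ i ∈ Icc a b, f i = f a + ∑ i ∈ Icc (a + 1) b, f i := by
  rw [← insert_Icc_add_one_left_eq_Icc h, sum_insert (by simp)]

theorem sum_Icc_add_sum_Icc {a b c : ℤ} (hab : a ≤ b + 1) (hbc : b ≤ c) (f : ℤ → M) :
    ∑ i ∈ Icc a b, f i + ∑ i ∈ Icc (b + 1) c, f i = ∑ i ∈ Icc a c, f i := by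
  rw [← sum_union (disjoint_left.2 fun i hi hi' => by simp only [mem_Icc] at hi hi'; omega)]
  congr 1
  ext i
  simp only [mem_union, mem_Icc]
  omega

theorem sum_Icc_comp_add_one (a b : ℤ) (f : ℤ → M) :
    ∑ i ∈ Icc a b, f (i + 1) = ∑ i ∈ Icc (a + 1) (b + 1), f i := by
  rw [← map_add_right_Icc, sum_map]
  rfl

end IntervalSums

noncomputable def cumSum {M : Type*} [AddCommMonoid M] (x : ℤ → M) (m : ℤ) : M :=
  ∑ j ∈ Icc 0 m, x j

theorem abs_intCast_sub_eq_toNat_add_toNat (i j : ℤ) :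
    |(i : ℝ) - j| = ((j - i).toNat : ℝ) + ((i - j).toNat : ℝ) := by
  have h : |i - j| = ((j - i).toNat : ℤ) + (i - j).toNat := by
    rcases abs_cases (i - j) with ⟨h, _⟩ | ⟨h, _⟩ <;> omega
  rw [← Int.cast_sub, ← Int.cast_abs, h]
  push_cast
  ring

theorem sum_sum_ite_le_not_le_mul_mul (x : ℤ → ℝ) {m N : ℤ} (hm : m ≤ N) :
    ∑ i ∈ Icc 0 N, ∑ j ∈ Icc 0 N, (if i ≤ m ∧ ¬ j ≤ m then 1 else 0) * x i * x j
      = cumSum x m * (cumSum x N - cumSum x m) := by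
  have hle : {i ∈ Icc 0 N | i ≤ m} = Icc 0 m := by
    ext i
    simp only [mem_filter, mem_Icc]
    omega
  have hgt : cumSum x N - cumSum x m = ∑ i ∈ Icc 0 N with ¬ i ≤ m, x i := by
    rw [cumSum, cumSum, ← sum_filter_add_sum_filter_not (Icc 0 N) (· ≤ m), hle,
      add_sub_cancel_left]
  rw [hgt, cumSum, ← hle, sum_filter, sum_filter, sum_mul_sum]
  refine sum_congr rfl fun i _ => sum_congr rfl fun j _ => ?_
  split_ifs <;> simp_all

theorem half_sum_sum_abs_sub_mul_mul (x : ℤ → ℝ) (N : ℤ) :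
    (1 / 2) * ∑ i ∈ Icc 0 N, ∑ j ∈ Icc 0 N, |(i : ℝ) - j| * x i * x j
      = ∑ m ∈ Icc 0 (N - 1), cumSum x m * (cumSum x N - cumSum x m) := by
  have hcount : ∀ i ∈ Icc 0 N, ∀ j ∈ Icc 0 N, ((j - i).toNat : ℝ)
      = ∑ m ∈ Icc 0 (N - 1), if i ≤ m ∧ ¬ j ≤ m then 1 else 0 := by
    intro i hi j hj
    rw [sum_boole, ← Int.card_Ico]
    congr 2
    ext m
    simp only [mem_Ico, mem_filter, mem_Icc] at hi hj ⊢
    omega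
  calc (1 / 2) * ∑ i ∈ Icc 0 N, ∑ j ∈ Icc 0 N, |(i : ℝ) - j| * x i * x j
      = ∑ i ∈ Icc 0 N, ∑ j ∈ Icc 0 N, ((j - i).toNat : ℝ) * x i * x j := by
        simp_rw [abs_intCast_sub_eq_toNat_add_toNat, add_mul, sum_add_distrib]
        rw [sum_comm (f := fun i j => ((i - j).toNat : ℝ) * x i * x j)]
        simp_rw [mul_right_comm _ (x _) (x _)]
        ring
    _ = ∑ i ∈ Icc 0 N, ∑ m ∈ Icc 0 (N - 1), ∑ j ∈ Icc 0 N,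
          (if i ≤ m ∧ ¬ j ≤ m then 1 else 0) * x i * x j := by
        refine sum_congr rfl fun i hi => ?_
        rw [sum_comm]
        refine sum_congr rfl fun j hj => ?_
        rw [hcount i hi j hj, sum_mul, sum_mul]
    _ = _ := by
        rw [sum_comm]
        exact sum_congr rfl fun m hm =>
          sum_sum_ite_le_not_le_mul_mul x (by simp only [mem_Icc] at hm; omega)

section Algebra

variable {R : Type*} [CommRing R] {x : ℤ → R}

theorem cumSum_add_one {m : ℤ} (hm : -1 ≤ m) : cumSum x (m + 1) = cumSum x m + x (m + 1) := by
  rw [cumSum, sum_Icc_eq_sum_Icc_sub_one_add (by omega), add_sub_cancel_right, cumSum]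

@[simp] theorem cumSum_zero : cumSum x 0 = x 0 := by simp [cumSum]

@[simp] theorem cumSum_neg_one : cumSum x (-1) = 0 := sum_empty

noncomputable def flux (x : ℤ → R) (m : ℤ) : R :=
  x (m + 1) * (1 - cumSum x (m + 1)) - x m * cumSum x (m - 1)

theorem flux_zero : flux x 0 = (1 - x 0 - x 1) * x 1 := by
  have h1 : cumSum x 1 = x 0 + x 1 := by
    simpa using cumSum_add_one (x := x) (m := 0) (by norm_num)
  simp only [flux, zero_add, zero_sub, cumSum_neg_one, h1]
  ring

theorem flux_eq_flux_sub_one_add {N n : ℤ} (hx : cumSum x N = 1) (hn0 : 0 < n) (hnN : n < N) :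
    flux x n = flux x (n - 1) + (x (n - 1) * ∑ j ∈ Icc 0 (n - 2), x j
      + x (n + 1) * ∑ j ∈ Icc (n + 2) N, x j - x n * (1 - x n)) := by
  have htail : ∑ j ∈ Icc (n + 2) N, x j = 1 - cumSum x (n + 1) := by
    have h := sum_Icc_add_sum_Icc (a := 0) (b := n + 1) (c := N) (by omega) (by omega) x
    rw [show n + 1 + 1 = n + 2 by ring] at h
    rw [← hx]
    unfold cumSum
    linear_combination h
  have hn : cumSum x n = cumSum x (n - 1) + x n := by
    simpa using cumSum_add_one (x := x) (m := n - 1) (by omega)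
  rw [htail, flux, flux, sub_add_cancel, sub_sub, one_add_one_eq_two, hn]
  unfold cumSum
  ring

theorem sum_flux_mul_eq_sum_sq {N : ℤ} (hN : 1 ≤ N) (hx : cumSum x N = 1) :
    ∑ m ∈ Icc 0 (N - 1), flux x m * (1 - 2 * cumSum x m)
      = ∑ l ∈ Icc 1 (N - 1),
          (x l * (1 - cumSum x (l - 1) - cumSum x l) ^ 2 + x l ^ 2 * (1 - x l)) := by
  have hin : ∑ m ∈ Icc 0 (N - 1), x (m + 1) * (1 - cumSum x (m + 1)) * (1 - 2 * cumSum x m)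
      = ∑ l ∈ Icc 1 (N - 1), x l * (1 - cumSum x l) * (1 - 2 * cumSum x (l - 1)) := by
    have h := sum_Icc_comp_add_one 0 (N - 1)
      fun l => x l * (1 - cumSum x l) * (1 - 2 * cumSum x (l - 1))
    simp only [add_sub_cancel_right, zero_add, sub_add_cancel] at h
    rw [h, sum_Icc_eq_sum_Icc_sub_one_add hN, hx, sub_self, mul_zero, zero_mul, add_zero]
  have hout : ∑ m ∈ Icc 0 (N - 1), x m * cumSum x (m - 1) * (1 - 2 * cumSum x m)
      = ∑ l ∈ Icc 1 (N - 1), x l * cumSum x (l - 1) * (1 - 2 * cumSum x l) := by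
    rw [sum_Icc_eq_add_sum_Icc_add_one (by omega), zero_sub, cumSum_neg_one, mul_zero, zero_mul,
      zero_add, zero_add]
  simp only [flux, sub_mul]
  rw [sum_sub_distrib, hin, hout, ← sum_sub_distrib]
  refine sum_congr rfl fun l hl => ?_
  have hl' : cumSum x l = cumSum x (l - 1) + x l := by
    simpa using cumSum_add_one (x := x) (m := l - 1) (by simp only [mem_Icc] at hl; omega)
  rw [hl']
  ring

theorem two_mul_sum_sum_mul (x : ℤ → R) {a m : ℤ} (hm : a - 1 ≤ m) :
    2 * ∑ j ∈ Icc a m, ∑ i ∈ Icc a (j - 1), x i * x j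
      = (∑ j ∈ Icc a m, x j) ^ 2 - ∑ j ∈ Icc a m, x j ^ 2 := by
  induction m, hm using Int.leInduction with
  | base => simp
  | succ m hm ih =>
    simp only [sum_Icc_eq_sum_Icc_sub_one_add (show a ≤ m + 1 by omega), add_sub_cancel_right]
    rw [← sum_mul]
    linear_combination ih

/-- The last summand is the polynomial in `∑ x j` and `∑ x j ^ 2` whose increments absorb the
difference of the two summands; it vanishes once `∑ x j = s`. -/
theorem sum_mul_sub_two_mul_sum_sub_sq (x : ℤ → R) (u s : R) {a n : ℤ} (hn : a - 1 ≤ n) :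
    ∑ l ∈ Icc a n, x l * (u - 2 * ∑ j ∈ Icc a (l - 1), x j - x l) ^ 2
      = ∑ l ∈ Icc a n, (x l * (s - u) ^ 2 + x l ^ 2 * (s - x l)
          + 2 * ∑ j ∈ Icc a (l - 1), ∑ i ∈ Icc a (j - 1), x i * x j * x l)
        + ((∑ j ∈ Icc a n, x j) * (2 * u * s - s ^ 2) - 2 * u * (∑ j ∈ Icc a n, x j) ^ 2
          + (∑ j ∈ Icc a n, x j) ^ 3
          + (∑ j ∈ Icc a n, x j ^ 2) * (∑ j ∈ Icc a n, x j - s)) := by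
  induction n, hn using Int.leInduction with
  | base => simp
  | succ n hn ih =>
    have htop : 2 * ∑ j ∈ Icc a n, ∑ i ∈ Icc a (j - 1), x i * x j * x (n + 1)
        = ((∑ j ∈ Icc a n, x j) ^ 2 - ∑ j ∈ Icc a n, x j ^ 2) * x (n + 1) := by
      rw [← two_mul_sum_sum_mul x hn, mul_assoc]
      simp only [sum_mul]
    simp only [sum_Icc_eq_sum_Icc_sub_one_add (show a ≤ n + 1 by omega), add_sub_cancel_right,
      htop]
    linear_combination ih

theorem sum_mul_one_sub_cumSum_sub_cumSum_sq {N : ℤ} (hN : 1 ≤ N) (hx : cumSum x N = 1) :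
    ∑ l ∈ Icc 1 (N - 1), x l * (1 - cumSum x (l - 1) - cumSum x l) ^ 2
      = (x 0 - x N) ^ 2 * ∑ l ∈ Icc 1 (N - 1), x l
        + ∑ l ∈ Icc 1 (N - 1), x l ^ 2 * (1 - x l - x 0 - x N)
        + 2 * ∑ l ∈ Icc 1 (N - 1), ∑ j ∈ Icc 1 (l - 1), ∑ i ∈ Icc 1 (j - 1),
            x i * x j * x l := by
  set s := ∑ l ∈ Icc 1 (N - 1), x l
  have hxN : x N = 1 - x 0 - s := by
    rw [← hx, cumSum, sum_Icc_eq_add_sum_Icc_add_one (by omega),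
      sum_Icc_eq_sum_Icc_sub_one_add (by omega : (0 : ℤ) + 1 ≤ N), zero_add]
    ring
  have hF : ∀ l ∈ Icc 1 (N - 1), 1 - cumSum x (l - 1) - cumSum x l
      = (1 - 2 * x 0) - 2 * ∑ j ∈ Icc 1 (l - 1), x j - x l := by
    intro l hl
    simp only [mem_Icc] at hl
    have hl' : cumSum x l = cumSum x (l - 1) + x l := by
      simpa using cumSum_add_one (x := x) (m := l - 1) (by omega)
    rw [hl', cumSum, sum_Icc_eq_add_sum_Icc_add_one (by omega), zero_add]
    ring
  have hsq : ∀ l, x l ^ 2 * (1 - x l - x 0 - x N) = x l ^ 2 * (s - x l) := by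
    intro l
    rw [hxN]
    ring
  rw [sum_congr rfl fun l hl => by rw [hF l hl],
    sum_mul_sub_two_mul_sum_sub_sq x (1 - 2 * x 0) s (by omega)]
  simp only [hsq, sum_add_distrib, ← sum_mul, mul_sum]
  rw [hxN]
  ring

theorem sum_flux_mul_one_sub_two_cumSum {N : ℤ} (hN : 1 ≤ N) (hx : cumSum x N = 1) :
    ∑ m ∈ Icc 0 (N - 1), flux x m * (1 - 2 * cumSum x m)
      = (x 0 - x N) ^ 2 * ∑ l ∈ Icc 1 (N - 1), x l
        + ∑ l ∈ Icc 1 (N - 1), x l ^ 2 * (1 - x l)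
        + ∑ l ∈ Icc 1 (N - 1), x l ^ 2 * (1 - x l - x 0 - x N)
        + 2 * ∑ l ∈ Icc 1 (N - 1), ∑ j ∈ Icc 1 (l - 1), ∑ i ∈ Icc 1 (j - 1),
            x i * x j * x l := by
  rw [sum_flux_mul_eq_sum_sq hN hx, sum_add_distrib, sum_mul_one_sub_cumSum_sub_cumSum_sq hN hx]
  ring

end Algebra

theorem hasDerivAt_cumSum {q : ℝ → ℤ → ℝ} {N : ℤ} {t : ℝ} (hsum : cumSum (q t) N = 1)
    (hode0 : HasDerivAt (fun s => q s 0) ((1 - q t 0 - q t 1) * q t 1) t)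
    (hoden : ∀ n : ℤ, 0 < n → n < N →
      HasDerivAt (fun s => q s n)
        (q t (n - 1) * (∑ j ∈ Icc 0 (n - 2), q t j)
          + q t (n + 1) * (∑ j ∈ Icc (n + 2) N, q t j) - q t n * (1 - q t n)) t)
    {m : ℤ} (hm0 : 0 ≤ m) (hmN : m < N) :
    HasDerivAt (fun s => cumSum (q s) m) (flux (q t) m) t := by
  induction m, hm0 using Int.leInduction with
  | base => simpa [flux_zero] using hode0
  | succ m hm ih =>
    have hflux := flux_eq_flux_sub_one_add hsum (n := m + 1) (by omega) hmN
    have hq := hoden (m + 1) (by omega) hmN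
    rw [add_sub_cancel_right] at hflux hq
    have hfun : (fun s => cumSum (q s) (m + 1)) = fun s => cumSum (q s) m + q s (m + 1) :=
      funext fun s => cumSum_add_one (by omega)
    rw [hfun, hflux]
    exact (ih (by omega)).fun_add hq

theorem stmt12_general (k : ℕ) (hk : 0 < k) (q : ℝ → ℤ → ℝ)
    (hpos : ∀ t n, 0 ≤ q t n)
    (hsum : ∀ t, ∑ n ∈ Finset.Icc (0:ℤ) (2*k), q t n = 1)
    (hode0 : ∀ t, HasDerivAt (fun s => q s 0) ((1 - q t 0 - q t 1) * q t 1) t)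
    (hoden : ∀ t, ∀ n : ℤ, 0 < n → n < 2*k →
      HasDerivAt (fun s => q s n)
        (q t (n-1) * (∑ j ∈ Finset.Icc (0:ℤ) (n-2), q t j)
          + q t (n+1) * (∑ j ∈ Finset.Icc (n+2) (2*k : ℤ), q t j)
          - q t n * (1 - q t n)) t) :
    ∀ t : ℝ,
      HasDerivAt (fun s => (1/2) * ∑ i ∈ Finset.Icc (0:ℤ) (2*k),
          ∑ j ∈ Finset.Icc (0:ℤ) (2*k), |(i : ℝ) - (j : ℝ)| * q s i * q s j)
        ((q t 0 - q t (2*k))^2 * (∑ l ∈ Finset.Icc (1:ℤ) (2*k-1), q t l)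
          + (∑ l ∈ Finset.Icc (1:ℤ) (2*k-1), (q t l)^2 * (1 - q t l))
          + (∑ l ∈ Finset.Icc (1:ℤ) (2*k-1), (q t l)^2 * (1 - q t l - q t 0 - q t (2*k)))
          + 2 * ∑ l ∈ Finset.Icc (1:ℤ) (2*k-1), ∑ j ∈ Finset.Icc (1:ℤ) (l-1),
              ∑ i ∈ Finset.Icc (1:ℤ) (j-1), q t i * q t j * q t l) t
      ∧ 0 ≤ (q t 0 - q t (2*k))^2 * (∑ l ∈ Finset.Icc (1:ℤ) (2*k-1), q t l)
          + (∑ l ∈ Finset.Icc (1:ℤ) (2*k-1), (q t l)^2 * (1 - q t l))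
          + (∑ l ∈ Finset.Icc (1:ℤ) (2*k-1), (q t l)^2 * (1 - q t l - q t 0 - q t (2*k)))
          + 2 * ∑ l ∈ Finset.Icc (1:ℤ) (2*k-1), ∑ j ∈ Finset.Icc (1:ℤ) (l-1),
              ∑ i ∈ Finset.Icc (1:ℤ) (j-1), q t i * q t j * q t l := by
  intro t
  have hN : (1 : ℤ) ≤ 2 * k := by omega
  have hW : HasDerivAt
      (fun s => ∑ m ∈ Icc 0 (2 * (k : ℤ) - 1), cumSum (q s) m * (1 - cumSum (q s) m))
      (∑ m ∈ Icc 0 (2 * (k : ℤ) - 1), flux (q t) m * (1 - 2 * cumSum (q t) m)) t := by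
    refine HasDerivAt.fun_sum fun m hm => ?_
    have hF := hasDerivAt_cumSum (hsum t) (hode0 t) (hoden t) (mem_Icc.1 hm).1
      (by have := (mem_Icc.1 hm).2; omega)
    exact (hF.fun_mul (hF.const_sub 1)).congr_deriv (by ring)
  rw [← sum_flux_mul_one_sub_two_cumSum hN (hsum t)]
  refine ⟨?_, ?_⟩
  · convert hW using 1
    funext s
    rw [half_sum_sum_abs_sub_mul_mul, show cumSum (q s) (2 * k) = 1 from hsum s]
  · rw [sum_flux_mul_eq_sum_sq hN (hsum t)]
    refine sum_nonneg fun l hl => add_nonneg (mul_nonneg (hpos t l) (sq_nonneg _))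
      (mul_nonneg (sq_nonneg _) (sub_nonneg.2 ?_))
    rw [← hsum t]
    exact single_le_sum (fun n _ => hpos t n) (by simp only [mem_Icc] at hl ⊢; omega)

theorem stmt12 (k : ℕ) (hk : 0 < k) (q : ℝ → ℤ → ℝ)
    (hpos : ∀ t n, 0 ≤ q t n)
    (hsum : ∀ t, ∑ n ∈ Finset.Icc (0:ℤ) (2*k), q t n = 1)
    (hode0 : ∀ t, HasDerivAt (fun s => q s 0) ((1 - q t 0 - q t 1) * q t 1) t)
    (hoden : ∀ t, ∀ n : ℤ, 0 < n → n < 2*k →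
      HasDerivAt (fun s => q s n)
        (q t (n-1) * (∑ j ∈ Finset.Icc (0:ℤ) (n-2), q t j)
          + q t (n+1) * (∑ j ∈ Finset.Icc (n+2) (2*k : ℤ), q t j)
          - q t n * (1 - q t n)) t)
    (hode2k : ∀ t, HasDerivAt (fun s => q s (2*k))
      ((1 - q t (2*k-1) - q t (2*k)) * q t (2*k-1)) t) :
    ∀ t : ℝ,
      HasDerivAt (fun s => (1/2) * ∑ i ∈ Finset.Icc (0:ℤ) (2*k),
          ∑ j ∈ Finset.Icc (0:ℤ) (2*k), |(i : ℝ) - (j : ℝ)| * q s i * q s j)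
        ((q t 0 - q t (2*k))^2 * (∑ l ∈ Finset.Icc (1:ℤ) (2*k-1), q t l)
          + (∑ l ∈ Finset.Icc (1:ℤ) (2*k-1), (q t l)^2 * (1 - q t l))
          + (∑ l ∈ Finset.Icc (1:ℤ) (2*k-1), (q t l)^2 * (1 - q t l - q t 0 - q t (2*k)))
          + 2 * ∑ l ∈ Finset.Icc (1:ℤ) (2*k-1), ∑ j ∈ Finset.Icc (1:ℤ) (l-1),
              ∑ i ∈ Finset.Icc (1:ℤ) (j-1), q t i * q t j * q t l) t
      ∧ 0 ≤ (q t 0 - q t (2*k))^2 * (∑ l ∈ Finset.Icc (1:ℤ) (2*k-1), q t l)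
          + (∑ l ∈ Finset.Icc (1:ℤ) (2*k-1), (q t l)^2 * (1 - q t l))
          + (∑ l ∈ Finset.Icc (1:ℤ) (2*k-1), (q t l)^2 * (1 - q t l - q t 0 - q t (2*k)))
          + 2 * ∑ l ∈ Finset.Icc (1:ℤ) (2*k-1), ∑ j ∈ Finset.Icc (1:ℤ) (l-1),
              ∑ i ∈ Finset.Icc (1:ℤ) (j-1), q t i * q t j * q t l :=
  stmt12_general k hk q hpos hsum hode0 hoden
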